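/- arXiv:2602.15754 — 3 statements merged into one kernel-verified Lean document; each statement's English description precedes it below -/
import Mathlib

section
/- For every monoid H, the restricted finitary power monoid P_{fin,×}(H) satisfies the ACC on principal two-sided ideals and is factorable. -/
open scoped Pointwise

/-- Two-sided divisibility in a monoid: `x` divides `y` if `y = u * x * v` for some `u, v`. -/
def DvdTS {M : Type*} [Monoid M] (x y : M) : Prop := ∃ u v : M, y = u * x * v

/-- A unit-divisor is a divisor of the identity. -/
def IsUnitDivisor {M : Type*} [Monoid M] (x : M) : Prop := DvdTS x 1

/-- `x` is a proper divisor of `y` if `x` divides `y` but `y` does not divide `x`. -/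
def IsProperDivisorTS {M : Type*} [Monoid M] (x y : M) : Prop := DvdTS x y ∧ ¬ DvdTS y x

/-- An atom is a non-unit that is not a product of two non-units. -/
def IsAtomTS {M : Type*} [Monoid M] (a : M) : Prop :=
  ¬ IsUnit a ∧ ∀ b c : M, a = b * c → IsUnit b ∨ IsUnit c

/-- A quark is a non-unit-divisor all of whose proper divisors are unit-divisors. -/
def IsQuarkTS {M : Type*} [Monoid M] (a : M) : Prop :=
  ¬ IsUnitDivisor a ∧ ∀ b : M, IsProperDivisorTS b a → IsUnitDivisor b

/-- An irreducible is a non-unit-divisor with no factorization `a = b * c` into proper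
divisors that are not unit-divisors. -/
def IsIrredTS {M : Type*} [Monoid M] (a : M) : Prop :=
  ¬ IsUnitDivisor a ∧
    ¬ ∃ b c : M, a = b * c ∧ IsProperDivisorTS b a ∧ IsProperDivisorTS c a ∧
      ¬ IsUnitDivisor b ∧ ¬ IsUnitDivisor c

def DedekindFiniteM (M : Type*) [Monoid M] : Prop := ∀ x y : M, x * y = 1 → y * x = 1

/-- ACC on principal two-sided ideals: no infinite sequence of consecutive proper divisors. -/
def ACCPrincipalTS (M : Type*) [Monoid M] : Prop :=
  ¬ ∃ f : ℕ → M, ∀ n : ℕ, IsProperDivisorTS (f (n + 1)) (f n)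

/-- Factorable: every non-unit-divisor is a (non-empty) product of irreducibles. -/
def FactorableM (M : Type*) [Monoid M] : Prop :=
  ∀ x : M, ¬ IsUnitDivisor x →
    ∃ l : List M, l ≠ [] ∧ (∀ a ∈ l, IsIrredTS a) ∧ l.prod = x

/-- Atomic: every non-unit-divisor is a (non-empty) product of atoms. -/
def AtomicM (M : Type*) [Monoid M] : Prop :=
  ∀ x : M, ¬ IsUnitDivisor x →
    ∃ l : List M, l ≠ [] ∧ (∀ a ∈ l, IsAtomTS a) ∧ l.prod = x

/-- The finitary power monoid: non-empty finite subsets of `H` under setwise multiplication. -/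
def PfinM (H : Type*) [Monoid H] : Submonoid (Set H) where
  carrier := {X : Set H | X.Finite ∧ X.Nonempty}
  mul_mem' := fun hX hY => ⟨hX.1.mul hY.1, hX.2.mul hY.2⟩
  one_mem' := ⟨Set.finite_one, 1, Set.mem_one.mpr rfl⟩

/-- The restricted finitary power monoid: non-empty finite subsets of `H` containing a unit. -/
def PfinTimes (H : Type*) [Monoid H] : Submonoid (Set H) where
  carrier := {X : Set H | X.Finite ∧ ∃ u ∈ X, IsUnit u}
  mul_mem' := by
    rintro X Y ⟨hXf, u, hu, hu'⟩ ⟨hYf, v, hv, hv'⟩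
    exact ⟨hXf.mul hYf, u * v, Set.mul_mem_mul hu hv, hu'.mul hv'⟩
  one_mem' := ⟨Set.finite_one, 1, Set.mem_one.mpr rfl, isUnit_one⟩

/-- The reduced finitary power monoid: finite subsets of `H` containing `1`. -/
def PfinOne (H : Type*) [Monoid H] : Submonoid (Set H) where
  carrier := {X : Set H | X.Finite ∧ (1 : H) ∈ X}
  mul_mem' := by
    rintro X Y ⟨hXf, hX1⟩ ⟨hYf, hY1⟩
    exact ⟨hXf.mul hYf, by simpa using Set.mul_mem_mul hX1 hY1⟩
  one_mem' := ⟨Set.finite_one, Set.mem_one.mpr rfl⟩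

lemma mem_PfinM {H : Type*} [Monoid H] {X : Set H} :
    X ∈ PfinM H ↔ X.Finite ∧ X.Nonempty := Iff.rfl

lemma mem_PfinTimes {H : Type*} [Monoid H] {X : Set H} :
    X ∈ PfinTimes H ↔ X.Finite ∧ ∃ u ∈ X, IsUnit u := Iff.rfl

lemma mem_PfinOne {H : Type*} [Monoid H] {X : Set H} :
    X ∈ PfinOne H ↔ X.Finite ∧ (1 : H) ∈ X := Iff.rfl

/-- Acyclic: `u * x * v ≠ x` whenever `u` or `v` is a non-unit. -/
def AcyclicM (M : Type*) [Monoid M] : Prop :=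
  ∀ u v x : M, (¬ IsUnit u ∨ ¬ IsUnit v) → u * x * v ≠ x

/-- Unit-cancellative: `x * y ≠ x ≠ y * x` whenever `y` is a non-unit. -/
def UnitCancellativeM (M : Type*) [Monoid M] : Prop :=
  ∀ x y : M, ¬ IsUnit y → x * y ≠ x ∧ y * x ≠ x

/-- Strongly unit-cancellative: `x * y ≠ x ≠ y * x` whenever `y ≠ 1`. -/
def StrongUnitCancellativeM (M : Type*) [Monoid M] : Prop :=
  ∀ x y : M, y ≠ 1 → x * y ≠ x ∧ y * x ≠ x

/-- Torsion-free: the identity is the only element with finitely many powers. -/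
def TorsionFreeM (M : Type*) [Monoid M] : Prop :=
  ∀ x : M, (Set.range fun k : ℕ => x ^ k).Finite → x = 1

/-- Cancellative monoid. -/
def CancellativeM (M : Type*) [Monoid M] : Prop :=
  ∀ a x y : M, (a * x = a * y → x = y) ∧ (x * a = y * a → x = y)

/-- The set of lengths of (irreducible) factorizations of `x`, with the conventions
`L(1) = {0}` and `L(u) = ∅` for a unit-divisor `u ≠ 1`. -/
def LengthSet {M : Type*} [Monoid M] (x : M) : Set ℕ :=
  {n | (x = 1 ∧ n = 0) ∨
    (¬ IsUnitDivisor x ∧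
      ∃ l : List M, l.length = n ∧ l ≠ [] ∧ (∀ a ∈ l, IsIrredTS a) ∧ l.prod = x)}

/-- The system of lengths: the family of non-empty length sets. -/
def SystemOfLengths (M : Type*) [Monoid M] : Set (Set ℕ) :=
  {L | L.Nonempty ∧ ∃ x : M, LengthSet x = L}

/-!
If `X` divides `Y` in `P_{fin,×}(H)`, say `Y = U * X * V`, then for units `u ∈ U`, `v ∈ V` the
injective map `x ↦ u * x * v` embeds `X` into `Y`. So `|X| ≤ |Y|`, and equality forces
`Y = u * X * v`, whence `Y` divides `X` back. Proper divisors therefore have strictly smaller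
cardinality, the proper-divisor relation is well founded, and well-founded induction splits every
non-unit-divisor into irreducibles.
-/

section Monoid

variable {M : Type*} [Monoid M]

theorem accPrincipalTS_iff_wellFounded :
    ACCPrincipalTS M ↔ WellFounded (IsProperDivisorTS (M := M)) := by
  rw [wellFounded_iff_isEmpty_descending_chain, ACCPrincipalTS, isEmpty_subtype, not_exists]

theorem FactorableM.of_wellFounded (hwf : WellFounded (IsProperDivisorTS (M := M))) :
    FactorableM M := by
  intro x
  induction x using hwf.induction with
  | _ x ih =>
    intro hx
    by_cases hirr : IsIrredTS x
    · exact ⟨[x], List.cons_ne_nil _ _, by simpa using hirr, List.prod_singleton⟩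
    obtain ⟨b, c, rfl, hb, hc, hbu, hcu⟩ := not_not.mp fun h => hirr ⟨hx, h⟩
    obtain ⟨lb, hlb, hlb_irr, rfl⟩ := ih b hb hbu
    obtain ⟨lc, -, hlc_irr, rfl⟩ := ih c hc hcu
    refine ⟨lb ++ lc, by simp [hlb], ?_, List.prod_append⟩
    simpa only [List.mem_append, or_imp, forall_and] using ⟨hlb_irr, hlc_irr⟩

lemma Units.injective_mul_mul (u v : Mˣ) : Function.Injective fun x : M => (u : M) * x * v :=
  v.isUnit.mul_left_injective.comp u.isUnit.mul_right_injective

end Monoid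

namespace PfinTimes

variable {H : Type*} [Monoid H]

lemma exists_units_image_subset_of_dvdTS {X Y : PfinTimes H} (h : DvdTS X Y) :
    ∃ u v : Hˣ, (fun x => (u : H) * x * v) '' (X : Set H) ⊆ Y := by
  obtain ⟨U, V, rfl⟩ := h
  obtain ⟨_, hu, u, rfl⟩ := U.2.2
  obtain ⟨_, hv, v, rfl⟩ := V.2.2
  refine ⟨u, v, ?_⟩
  rintro _ ⟨x, hx, rfl⟩
  exact Set.mul_mem_mul (Set.mul_mem_mul hu hx) hv

lemma dvdTS_of_units_image_eq {X Y : PfinTimes H} (u v : Hˣ)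
    (h : (fun x => (u : H) * x * v) '' (X : Set H) = Y) : DvdTS Y X := by
  refine ⟨⟨{((u⁻¹ : Hˣ) : H)}, Set.finite_singleton _, _, rfl, (u⁻¹).isUnit⟩,
    ⟨{((v⁻¹ : Hˣ) : H)}, Set.finite_singleton _, _, rfl, (v⁻¹).isUnit⟩, Subtype.ext ?_⟩
  change (X : Set H) = {((u⁻¹ : Hˣ) : H)} * (Y : Set H) * {((v⁻¹ : Hˣ) : H)}
  rw [Set.singleton_mul, Set.mul_singleton, ← h, Set.image_image, Set.image_image]
  simp [mul_assoc]

lemma ncard_lt_of_isProperDivisorTS {X Y : PfinTimes H} (h : IsProperDivisorTS X Y) :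
    (X : Set H).ncard < (Y : Set H).ncard := by
  obtain ⟨hXY, hYX⟩ := h
  obtain ⟨u, v, hsub⟩ := exists_units_image_subset_of_dvdTS hXY
  have hcard := Set.ncard_image_of_injective (X : Set H) (Units.injective_mul_mul u v)
  refine lt_of_le_of_ne (hcard ▸ Set.ncard_le_ncard hsub Y.2.1) fun heq => hYX ?_
  exact dvdTS_of_units_image_eq u v (Set.eq_of_subset_of_ncard_le hsub (by omega) Y.2.1)

theorem wellFounded_isProperDivisorTS :
    WellFounded (IsProperDivisorTS (M := PfinTimes H)) :=
  Subrelation.wf ncard_lt_of_isProperDivisorTS (InvImage.wf _ wellFounded_lt)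

end PfinTimes

/-- `P_{fin,×}(H)` satisfies the ACC on principal two-sided ideals and is
factorable. -/
theorem pfinTimes_ACC_and_factorable (H : Type*) [Monoid H] :
    ACCPrincipalTS (PfinTimes H) ∧ FactorableM (PfinTimes H) :=
  ⟨accPrincipalTS_iff_wellFounded.mpr PfinTimes.wellFounded_isProperDivisorTS,
    .of_wellFounded PfinTimes.wellFounded_isProperDivisorTS⟩
end

section
/- If a monoid H is a submonoid of a torsion-free group, then the reduced finitary power monoid P_{fin,1}(H) is acyclic, and hence unit-cancellative and torsion-free. -/
open scoped Pointwise

/-!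
A submonoid `H` of a torsion-free group is torsion-free. Suppose `U * X * V = X` in
`P_{fin,1}(H)`. Since `1 ∈ V`, every `u ∈ U` satisfies `u * X ⊆ X`, and since `1 ∈ X`, all
powers of `u` lie in the finite set `X`; hence `u = 1`. Symmetrically every element of `V` is
`1`, so `U = V = {1}`. Acyclicity gives unit-cancellativity at once, and in an acyclic monoid
`x ^ i = x ^ (i + n)` with `n > 0` forces `x ^ n`, hence `x`, to be a unit; the only unit of
`P_{fin,1}(H)` is `{1}`.
-/

section

variable {M N : Type*} [Monoid M] [Monoid N]

theorem TorsionFreeM.of_injective (hN : TorsionFreeM N) (f : M →* N)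
    (hf : Function.Injective f) : TorsionFreeM M := by
  intro x hx
  have hfx : (Set.range fun k : ℕ => f x ^ k).Finite := by
    simpa only [← Set.range_comp, Function.comp_def, map_pow] using hx.image f
  exact hf (by rw [hN _ hfx, map_one])

theorem TorsionFreeM.eq_one_of_forall_mul_mem (hM : TorsionFreeM M) {X : Set M} (hX : X.Finite)
    (hX1 : 1 ∈ X) {u : M} (hu : ∀ y ∈ X, u * y ∈ X) : u = 1 := by
  refine hM u (hX.subset (Set.range_subset_iff.2 fun k => ?_))
  induction k with
  | zero => simpa using hX1
  | succ k ih => simpa only [pow_succ'] using hu _ ih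

theorem TorsionFreeM.eq_one_of_forall_mul_mem' (hM : TorsionFreeM M) {X : Set M}
    (hX : X.Finite) (hX1 : 1 ∈ X) {v : M} (hv : ∀ y ∈ X, y * v ∈ X) : v = 1 := by
  refine hM v (hX.subset (Set.range_subset_iff.2 fun k => ?_))
  induction k with
  | zero => simpa using hX1
  | succ k ih => simpa only [pow_succ] using hv _ ih

theorem AcyclicM.unitCancellativeM (h : AcyclicM M) : UnitCancellativeM M := fun x y hy =>
  ⟨fun hxy => h 1 y x (.inr hy) (by rwa [one_mul]),
    fun hyx => h y 1 x (.inl hy) (by rwa [mul_one])⟩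

theorem AcyclicM.isUnit_of_finite_range_pow (h : AcyclicM M) {x : M}
    (hx : (Set.range fun k : ℕ => x ^ k).Finite) : IsUnit x := by
  obtain ⟨i, j, hij, hpow⟩ :=
    Set.Finite.exists_lt_map_eq_of_forall_mem (fun k => Set.mem_range_self k) hx
  rw [← isUnit_pow_iff (Nat.sub_pos_of_lt hij).ne']
  by_contra hunit
  refine h 1 (x ^ (j - i)) (x ^ i) (.inr hunit) ?_
  rw [one_mul, ← pow_add, Nat.add_sub_cancel' hij.le, hpow]

theorem AcyclicM.torsionFreeM [Subsingleton Mˣ] (h : AcyclicM M) : TorsionFreeM M :=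
  fun _ hx => isUnit_iff_eq_one.1 (h.isUnit_of_finite_range_pow hx)

namespace PfinOne

theorem eq_one_iff {X : PfinOne M} : X = 1 ↔ ∀ x ∈ (X : Set M), x = 1 := by
  refine ⟨fun hX x hx => by simpa [hX] using hx, fun hX => Subtype.ext ?_⟩
  ext x
  exact ⟨hX x, fun hx => (Set.mem_one.1 hx) ▸ X.2.2⟩

instance : Subsingleton (PfinOne M)ˣ where
  allEq U V := by
    suffices ∀ W : (PfinOne M)ˣ, W = 1 by rw [this U, this V]
    intro W
    have hset : (W : Set M) * ((W⁻¹ : (PfinOne M)ˣ) : Set M) = 1 :=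
      congrArg Subtype.val W.mul_inv
    refine Units.ext (eq_one_iff.2 fun x hx => ?_)
    simpa [hset] using Set.mul_mem_mul hx (W⁻¹ : (PfinOne M)ˣ).val.2.2

theorem acyclicM (hM : TorsionFreeM M) : AcyclicM (PfinOne M) := by
  rintro U V X hUV hUXV
  have hset : (U : Set M) * X * V = X := congrArg Subtype.val hUXV
  obtain ⟨hX, hX1⟩ := X.2
  rcases hUV with hU | hV
  · refine hU (isUnit_iff_eq_one.2 (eq_one_iff.2 fun u hu => ?_))
    refine hM.eq_one_of_forall_mul_mem hX hX1 fun y hy => hset ▸ ?_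
    simpa using Set.mul_mem_mul (Set.mul_mem_mul hu hy) V.2.2
  · refine hV (isUnit_iff_eq_one.2 (eq_one_iff.2 fun v hv => ?_))
    refine hM.eq_one_of_forall_mul_mem' hX hX1 fun y hy => hset ▸ ?_
    simpa using Set.mul_mem_mul (Set.mul_mem_mul U.2.2 hy) hv

end PfinOne

end

/-- if `H` is a submonoid of a torsion-free group, then `P_{fin,1}(H)` is
acyclic, hence unit-cancellative and torsion-free. -/
theorem pfinOne_acyclic_of_torsion_free_group {G : Type*} [Group G]
    (hG : TorsionFreeM G) (H : Submonoid G) :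
    AcyclicM (PfinOne H) ∧ UnitCancellativeM (PfinOne H) ∧ TorsionFreeM (PfinOne H) := by
  have hacyclic := PfinOne.acyclicM (hG.of_injective H.subtype H.subtype_injective)
  exact ⟨hacyclic, hacyclic.unitCancellativeM, hacyclic.torsionFreeM⟩
end

section
/- For every monoid H, every irreducible element of the reduced finitary power monoid P_{fin,1}(H) is a quark of P_{fin,1}(H). -/
open scoped Pointwise

/-!
In `P_{fin,1}(H)` every element contains `1`, so `A ∣ B` forces `A ⊆ B`: divisibility is a
partial order, the only unit-divisor is `{1}`, and the proper divisors of `X` are its divisors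
other than `X`. If `X` is irreducible and `X = X * R` with `1 ≠ r ∈ R`, then also
`X = (X \ {r}) * R`, which irreducibility forbids unless `R ∈ {1, X}`. Hence both factors of
any factorization `X = A * B` lie in `{1, X}`, and applying this twice to `X = U * (Y * V)` shows
that every divisor `Y` of `X` is `1` or `X`.
-/

section DvdTS

variable {M : Type*} [Monoid M]

theorem dvdTS_refl (x : M) : DvdTS x x := ⟨1, 1, by simp⟩

theorem dvdTS_mul_right (a b : M) : DvdTS a (a * b) := ⟨1, b, by simp⟩

theorem dvdTS_mul_left (a b : M) : DvdTS a (b * a) := ⟨b, 1, by simp⟩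

theorem one_dvdTS (x : M) : DvdTS 1 x := ⟨1, x, by simp⟩

theorem isQuarkTS_of_forall_dvdTS {a : M} (ha : ¬ IsUnitDivisor a)
    (h : ∀ b, DvdTS b a → b = 1 ∨ b = a) : IsQuarkTS a := by
  refine ⟨ha, fun b ⟨hba, hab⟩ => ?_⟩
  rcases h b hba with rfl | rfl
  · exact dvdTS_refl 1
  · exact absurd (dvdTS_refl b) hab

variable [Std.Antisymm (DvdTS (M := M))]

theorem isUnitDivisor_iff_eq_one {x : M} : IsUnitDivisor x ↔ x = 1 :=
  ⟨fun h => antisymm h (one_dvdTS x), fun h => h ▸ dvdTS_refl 1⟩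

theorem isProperDivisorTS_iff_ne {x y : M} :
    IsProperDivisorTS x y ↔ DvdTS x y ∧ x ≠ y :=
  and_congr_right fun hxy =>
    ⟨fun hyx h => hyx (h ▸ dvdTS_refl x), fun hne hyx => hne (antisymm hxy hyx)⟩

theorem IsIrredTS.eq_one_or_eq_of_eq_mul {a b c : M} (ha : IsIrredTS a) (h : a = b * c) :
    b = 1 ∨ b = a ∨ c = 1 ∨ c = a := by
  by_contra! hbc
  obtain ⟨hb1, hba, hc1, hca⟩ := hbc
  refine ha.2 ⟨b, c, h, ?_, ?_, ?_, ?_⟩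
  · exact isProperDivisorTS_iff_ne.2 ⟨h ▸ dvdTS_mul_right b c, hba⟩
  · exact isProperDivisorTS_iff_ne.2 ⟨h ▸ dvdTS_mul_left c b, hca⟩
  · exact fun hb => hb1 (isUnitDivisor_iff_eq_one.1 hb)
  · exact fun hc => hc1 (isUnitDivisor_iff_eq_one.1 hc)

end DvdTS

section SetMul

variable {H : Type*} [MulOneClass H] {X R : Set H} {r : H}

theorem Set.sdiff_singleton_mul_of_mul_eq_self (h1X : (1 : H) ∈ X \ {r}) (h1R : (1 : H) ∈ R)
    (hr : r ∈ R) (hX : X * R = X) : (X \ {r}) * R = X := by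
  refine (Set.mul_subset_mul_right Set.sdiff_subset).trans hX.le |>.antisymm fun x hx => ?_
  by_cases hxr : x = r
  · simpa [hxr] using Set.mul_mem_mul h1X hr
  · simpa using Set.mul_mem_mul (Set.mem_sdiff_singleton.2 ⟨hx, hxr⟩) h1R

theorem Set.mul_sdiff_singleton_of_mul_eq_self (h1X : (1 : H) ∈ X \ {r}) (h1R : (1 : H) ∈ R)
    (hr : r ∈ R) (hX : R * X = X) : R * (X \ {r}) = X := by
  refine (Set.mul_subset_mul_left Set.sdiff_subset).trans hX.le |>.antisymm fun x hx => ?_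
  by_cases hxr : x = r
  · simpa [hxr] using Set.mul_mem_mul hr h1X
  · simpa using Set.mul_mem_mul h1R (Set.mem_sdiff_singleton.2 ⟨hx, hxr⟩)

end SetMul

namespace PfinOne

variable {H : Type*} [Monoid H]

theorem one_mem (X : PfinOne H) : (1 : H) ∈ (X : Set H) := X.2.2

theorem coe_subset_of_dvdTS {A B : PfinOne H} (h : DvdTS A B) : (A : Set H) ⊆ B := by
  obtain ⟨u, v, rfl⟩ := h
  intro a ha
  simpa using Set.mul_mem_mul (Set.mul_mem_mul (one_mem u) ha) (one_mem v)

instance : Std.Antisymm (DvdTS (M := PfinOne H)) :=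
  ⟨fun _ _ hAB hBA => Subtype.ext (coe_subset_of_dvdTS hAB |>.antisymm (coe_subset_of_dvdTS hBA))⟩

theorem exists_mem_ne_one {X : PfinOne H} (hX : X ≠ 1) : ∃ r ∈ (X : Set H), r ≠ 1 := by
  by_contra! h
  exact hX (Subtype.ext (Set.eq_singleton_iff_unique_mem.2 ⟨one_mem X, h⟩))

def erase (X : PfinOne H) {r : H} (hr : r ≠ 1) : PfinOne H :=
  ⟨(X : Set H) \ {r}, X.2.1.sdiff, one_mem X, hr.symm⟩

theorem erase_ne_self (X : PfinOne H) {r : H} (hr : r ≠ 1) (hrX : r ∈ (X : Set H)) :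
    erase X hr ≠ X := fun h => (h.symm ▸ hrX : r ∈ (erase X hr : Set H)).2 rfl

theorem eq_one_or_eq_of_eq_mul_right {X R : PfinOne H} (hX : IsIrredTS X) (h : X = X * R) :
    R = 1 ∨ R = X := by
  by_contra! hR
  obtain ⟨r, hrR, hr1⟩ := exists_mem_ne_one hR.1
  have hrX : r ∈ (X : Set H) := coe_subset_of_dvdTS (h ▸ dvdTS_mul_left R X) hrR
  have hXR : X = erase X hr1 * R := Subtype.ext <| Eq.symm <|
    Set.sdiff_singleton_mul_of_mul_eq_self (one_mem (erase X hr1)) (one_mem R) hrR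
      (congrArg Subtype.val h).symm
  rcases hX.eq_one_or_eq_of_eq_mul hXR with hB | hB | hR' | hR'
  · exact hR.2 (by rwa [hB, one_mul, eq_comm] at hXR)
  · exact erase_ne_self X hr1 hrX hB
  · exact hR.1 hR'
  · exact hR.2 hR'

theorem eq_one_or_eq_of_eq_mul_left {X R : PfinOne H} (hX : IsIrredTS X) (h : X = R * X) :
    R = 1 ∨ R = X := by
  by_contra! hR
  obtain ⟨r, hrR, hr1⟩ := exists_mem_ne_one hR.1
  have hrX : r ∈ (X : Set H) := coe_subset_of_dvdTS (h ▸ dvdTS_mul_right R X) hrR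
  have hXR : X = R * erase X hr1 := Subtype.ext <| Eq.symm <|
    Set.mul_sdiff_singleton_of_mul_eq_self (one_mem (erase X hr1)) (one_mem R) hrR
      (congrArg Subtype.val h).symm
  rcases hX.eq_one_or_eq_of_eq_mul hXR with hR' | hR' | hB | hB
  · exact hR.1 hR'
  · exact hR.2 hR'
  · exact hR.2 (by rwa [hB, mul_one, eq_comm] at hXR)
  · exact erase_ne_self X hr1 hrX hB

theorem eq_one_or_eq_of_eq_mul {X A B : PfinOne H} (hX : IsIrredTS X)
    (h : X = A * B) : (A = 1 ∨ A = X) ∧ (B = 1 ∨ B = X) := by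
  rcases hX.eq_one_or_eq_of_eq_mul h with rfl | rfl | rfl | rfl
  · exact ⟨.inl rfl, .inr (by rw [h, one_mul])⟩
  · exact ⟨.inr rfl, eq_one_or_eq_of_eq_mul_right hX h⟩
  · exact ⟨.inr (by rw [h, mul_one]), .inl rfl⟩
  · exact ⟨eq_one_or_eq_of_eq_mul_left hX h, .inr rfl⟩

theorem eq_one_or_eq_of_dvdTS {X Y : PfinOne H} (hX : IsIrredTS X) (hYX : DvdTS Y X) :
    Y = 1 ∨ Y = X := by
  obtain ⟨U, V, h⟩ := hYX
  rw [mul_assoc] at h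
  rcases (eq_one_or_eq_of_eq_mul hX h).2 with hYV | hYV
  · exact .inl (isUnitDivisor_iff_eq_one.1 (hYV ▸ dvdTS_mul_right Y V : DvdTS Y 1))
  · exact (eq_one_or_eq_of_eq_mul hX hYV.symm).1

end PfinOne

/-- every irreducible of `P_{fin,1}(H)` is a quark. -/
theorem pfinOne_irreducible_is_quark {H : Type*} [Monoid H]
    (X : PfinOne H) (hX : IsIrredTS X) : IsQuarkTS X :=
  isQuarkTS_of_forall_dvdTS hX.1 fun _ => PfinOne.eq_one_or_eq_of_dvdTS hX
end
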